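/- Let K, T : H → H be adjointable operators such that there exists λ > 0 with ⟨T*x, T*x⟩ ≤ λ·⟨K*x, K*x⟩ for all x ∈ H (i.e. T T* ≤ λ·K K*; this holds in particular whenever the range of T is contained in the range of K and the range of K is closed). If (T_ω)_{ω∈Ω} is an integral K-operator frame for H with bounds A, B > 0, then (T_ω)_{ω∈Ω} is an integral T-operator frame for H with bounds A/λ and B; that is, for every x ∈ H, (A/λ)·⟨T*x, T*x⟩ ≤ ∫_Ω ⟨T_ω x, T_ω x⟩ dμ(ω) ≤ B·⟨x, x⟩. -/

import Mathlib

open MeasureTheory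

variable {A : Type*} [CStarAlgebra A] [PartialOrder A] [StarOrderedRing A]
variable {H : Type*} [NormedAddCommGroup H] [NormedSpace ℂ H] [SMul A H] [CStarModule A H]
variable {Ω : Type*} [MeasurableSpace Ω]

local notation "⟪" x ", " y "⟫" => inner A x y

/-- `S` is an adjoint of `T` on the Hilbert `A`-module `H`:
`⟪T x, y⟫ = ⟪x, S y⟫` for all `x y`. -/
def IsAdjointOp (T S : H →L[ℂ] H) : Prop :=
  ∀ x y : H, ⟪T x, y⟫ = ⟪x, S y⟫

/-- `(T ω)` is an integral `K`-operator frame with bounds `a`, `b`, where `Ks`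
denotes the adjoint `K*` of `K`. -/
def IsIntegralKOpFrameWith (μ : Measure Ω) (Ks : H →L[ℂ] H)
    (T : Ω → H →L[ℂ] H) (a b : ℝ) : Prop :=
  0 < a ∧ 0 < b ∧ ∀ x : H,
    Integrable (fun ω => ⟪T ω x, T ω x⟫) μ ∧
    a • ⟪Ks x, Ks x⟫ ≤ ∫ ω, ⟪T ω x, T ω x⟫ ∂μ ∧
    ∫ ω, ⟪T ω x, T ω x⟫ ∂μ ≤ b • ⟪x, x⟫

/-- `(T ω)` is an integral operator frame with bounds `a`, `b`. -/
def IsIntegralOpFrameWith (μ : Measure Ω) (T : Ω → H →L[ℂ] H) (a b : ℝ) : Prop :=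
  0 < a ∧ 0 < b ∧ ∀ x : H,
    Integrable (fun ω => ⟪T ω x, T ω x⟫) μ ∧
    a • ⟪x, x⟫ ≤ ∫ ω, ⟪T ω x, T ω x⟫ ∂μ ∧
    ∫ ω, ⟪T ω x, T ω x⟫ ∂μ ≤ b • ⟪x, x⟫

theorem div_smul_le_of_le_smul {M : Type*} [AddCommGroup M] [PartialOrder M]
    [IsOrderedAddMonoid M] [Module ℝ M] [PosSMulMono ℝ M] {p q : M} {a lam : ℝ}
    (ha : 0 ≤ a) (hlam : 0 < lam) (hpq : p ≤ lam • q) :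
    (a / lam) • p ≤ a • q :=
  calc (a / lam) • p ≤ (a / lam) • (lam • q) := smul_le_smul_of_nonneg_left hpq (by positivity)
    _ = a • q := by rw [smul_smul, div_mul_cancel₀ a hlam.ne']

omit [StarOrderedRing A] in
theorem IsIntegralKOpFrameWith.of_lowerBound_le {μ : Measure Ω} {Ks Ts : H →L[ℂ] H}
    {F : Ω → H →L[ℂ] H} {a a' b : ℝ} (hframe : IsIntegralKOpFrameWith (A := A) μ Ks F a b)
    (ha' : 0 < a') (hlower : ∀ x : H, a' • ⟪Ts x, Ts x⟫ ≤ a • ⟪Ks x, Ks x⟫) :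
    IsIntegralKOpFrameWith (A := A) μ Ts F a' b := by
  obtain ⟨-, hb, hx⟩ := hframe
  refine ⟨ha', hb, fun x => ?_⟩
  obtain ⟨hint, hl, hu⟩ := hx x
  exact ⟨hint, (hlower x).trans hl, hu⟩

theorem integralKOpFrame_isIntegralTOpFrame_general
    (μ : Measure Ω) (Ks Ts : H →L[ℂ] H)
    (lam : ℝ) (hlam : 0 < lam)
    (hle : ∀ x : H, ⟪Ts x, Ts x⟫ ≤ lam • ⟪Ks x, Ks x⟫)
    (F : Ω → H →L[ℂ] H) (a b : ℝ)
    (hframe : IsIntegralKOpFrameWith (A := A) μ Ks F a b) :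
    IsIntegralKOpFrameWith (A := A) μ Ts F (a / lam) b :=
  hframe.of_lowerBound_le (div_pos hframe.1 hlam) fun x =>
    div_smul_le_of_le_smul hframe.1.le hlam (hle x)

/-- if `T T* ≤ λ • K K*` (e.g. when `Range T ⊆ Range K` with `Range K` closed),
then every integral `K`-operator frame with bounds `a`, `b` is an integral `T`-operator
frame with bounds `a / λ` and `b`. -/
theorem integralKOpFrame_isIntegralTOpFrame
    (μ : Measure Ω) (K Ks T' Ts : H →L[ℂ] H)
    (hK : IsAdjointOp (A := A) K Ks) (hT : IsAdjointOp (A := A) T' Ts)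
    (lam : ℝ) (hlam : 0 < lam)
    (hle : ∀ x : H, ⟪Ts x, Ts x⟫ ≤ lam • ⟪Ks x, Ks x⟫)
    (F : Ω → H →L[ℂ] H) (a b : ℝ)
    (hframe : IsIntegralKOpFrameWith (A := A) μ Ks F a b) :
    IsIntegralKOpFrameWith (A := A) μ Ts F (a / lam) b :=
  integralKOpFrame_isIntegralTOpFrame_general μ Ks Ts lam hlam hle F a b hframe
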